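/- For q = 1, the R-linear bijection d ↦ d' from R𝔖_{r+s} to the walled Brauer algebra B^n_{r,s} (obtained on diagrams by rotating/flipping the vertices to the right of the wall, exchanging each top vertex with the corresponding bottom vertex) intertwines the endomorphism representations: if σ_{r+s}(d) ∈ End_{GL_n(R)}(V^{⊗(r+s)}) corresponds to σ_{r,s}(d') ∈ End_{GL_n(R)}(V^{⊗r} ⊗ (V*)^{⊗s}) under the canonical isomorphism End_R(V^{⊗(r+s)}) ≅ End_R(V^{⊗r} ⊗ (V*)^{⊗s}) given by permuting tensor factors (identifying V ≅ V* via v_i ↦ v_i*), then the resulting square of maps commutes. -/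

import Mathlib

namespace ClassicalWalledBrauer

variable (R : Type*) [CommRing R] (n r s : ℕ)

/-- Multi-indices labelling the basis of `V^{⊗r} ⊗ (V^*)^{⊗s}` (or of `V^{⊗(r+s)}`),
`V = R^n`. -/
abbrev Idx (n m : ℕ) := Fin m → Fin n

/-- Mixed tensor space `V^{⊗r} ⊗ (V^*)^{⊗s}` (and likewise ordinary tensor space
`V^{⊗(r+s)}`), modelled on its basis of multi-indices; positions `< r` carry `V`,
positions `≥ r` carry `V^*` (identified with `V` via `v_i ↦ v_i^*`). -/
abbrev TSpace (R : Type*) [CommRing R] (n m : ℕ) := Idx n m → R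

/-- Matrix of the action of `g ∈ GL_n(R)` on mixed tensor space: `g` acts naturally on the
`V`-factors (positions `< r`) and by `(g·f)(v) = f(g⁻¹ v)` on the `V^*`-factors. -/
def glMixedMatrix (g : GL (Fin n) R) : Matrix (Idx n (r + s)) (Idx n (r + s)) R :=
  fun a a' => ∏ k : Fin (r + s),
    if (k : ℕ) < r then (g : Matrix (Fin n) (Fin n) R) (a k) (a' k)
    else ((g⁻¹ : GL (Fin n) R) : Matrix (Fin n) (Fin n) R) (a' k) (a k)

/-- Matrix of the natural action of `g ∈ GL_n(R)` on ordinary tensor space `V^{⊗m}`. -/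
def glOrdMatrix (m : ℕ) (g : GL (Fin n) R) : Matrix (Idx n m) (Idx n m) R :=
  fun a a' => ∏ k : Fin m, (g : Matrix (Fin n) (Fin n) R) (a k) (a' k)

/-- `G`-endomorphisms of mixed tensor space. -/
def EndGMixed : Set (Module.End R (TSpace R n (r + s))) :=
  {φ | ∀ g : GL (Fin n) R, Commute φ (Matrix.toLin' (glMixedMatrix R n r s g))}

/-- `G`-endomorphisms of ordinary tensor space `V^{⊗(r+s)}`. -/
def EndGOrd : Set (Module.End R (TSpace R n (r + s))) :=
  {φ | ∀ g : GL (Fin n) R, Commute φ (Matrix.toLin' (glOrdMatrix R n (r + s) g))}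

/-- Vertices of a Brauer `(r+s)`-diagram: top row (`inl`) and bottom row (`inr`). -/
abbrev Vertex (m : ℕ) := Fin m ⊕ Fin m

/-- The row (top = `true`) of a vertex. -/
def rowOf {m : ℕ} : Vertex m → Bool := Sum.elim (fun _ => true) (fun _ => false)

/-- Whether a vertex lies to the left of the wall (in the first `r` positions). -/
def leftOf {m : ℕ} (r : ℕ) : Vertex m → Bool :=
  Sum.elim (fun k => decide ((k : ℕ) < r)) (fun k => decide ((k : ℕ) < r))

/-- A walled Brauer diagram: a perfect matching of the `2(r+s)` vertices such that
propagating edges (connecting opposite rows) stay on one side of the wall, and horizontal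
edges (within a row) cross the wall. -/
def IsWalled (d : Vertex (r + s) → Vertex (r + s)) : Prop :=
  (∀ v, d (d v) = v) ∧ (∀ v, d v ≠ v) ∧
  (∀ v, (rowOf v ≠ rowOf (d v) → leftOf r v = leftOf r (d v)) ∧
        (rowOf v = rowOf (d v) → leftOf r v ≠ leftOf r (d v)))

/-- The walled Brauer diagrams. -/
def WalledDiagram := {d : Vertex (r + s) → Vertex (r + s) // IsWalled r s d}

/-- The matrix of the action of a Brauer diagram `d` (for `q = 1`): the `(a, b)` entry is
`1` if both ends of each edge of `d` carry the same index (top row labelled by `a`, bottom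
row by `b`), and `0` otherwise. -/
def diagMatrix (m : ℕ) (d : Vertex m → Vertex m) : Matrix (Idx n m) (Idx n m) R :=
  fun a b =>
    if ∀ v, Sum.elim a b v = Sum.elim a b (d v) then 1 else 0

/-- Matrix of the place-permutation action of `σ ∈ 𝔖_m` on `V^{⊗m}` (the totally
propagating Brauer diagram of `σ`). -/
def permMatrix (m : ℕ) (σ : Equiv.Perm (Fin m)) : Matrix (Idx n m) (Idx n m) R :=
  fun a b => if b = a ∘ σ then 1 else 0


/-- The totally propagating Brauer diagram of a permutation `σ`: top vertex `σ k'` is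
joined to bottom vertex `k'`. -/
def permDiagram (m : ℕ) (σ : Equiv.Perm (Fin m)) : Vertex m → Vertex m :=
  Sum.elim (fun k => Sum.inr (σ⁻¹ k)) (fun k' => Sum.inl (σ k'))

/-- The flip interchanging, to the right of the wall, each top vertex with the
corresponding bottom vertex. -/
def flip : Vertex (r + s) → Vertex (r + s) :=
  Sum.elim (fun k => if (k : ℕ) < r then Sum.inl k else Sum.inr k)
    (fun k => if (k : ℕ) < r then Sum.inr k else Sum.inl k)

/-- The multi-index mixing `a` (positions `< r`) and `b` (positions `≥ r`). -/
def mix (a b : Idx n (r + s)) : Idx n (r + s) := fun k => if (k : ℕ) < r then a k else b k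

/-- The canonical `R`-linear isomorphism
`End_R(V^{⊗(r+s)}) ≅ End_R(V^{⊗r} ⊗ (V^*)^{⊗s})` given by permuting tensor factors
(identifying `V ≅ V^*` via `v_i ↦ v_i^*`); on matrices it exchanges, for the positions to
the right of the wall, the row and column entries. -/
noncomputable def theta (φ : Module.End R (TSpace R n (r + s))) :
    Module.End R (TSpace R n (r + s)) :=
  Matrix.toLin' (fun a b => LinearMap.toMatrix' φ (mix n r s a b) (mix n r s b a))

/-!
Precomposing the vertex labelling `Sum.elim a b` with the flip gives the labelling
`Sum.elim (mix a b) (mix b a)`, so conjugating any diagram by the flip acts on its matrix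
exactly as `theta` does. It remains that the totally propagating diagram of `σ` has the
permutation matrix of `σ`.
-/

theorem flip_involutive : Function.Involutive (flip r s) := by
  rintro (k | k) <;> by_cases hk : (k : ℕ) < r <;> simp [flip, hk]

theorem sum_elim_comp_flip (a b : Idx n (r + s)) :
    Sum.elim a b ∘ flip r s = Sum.elim (mix n r s a b) (mix n r s b a) := by
  ext (k | k) <;> by_cases hk : (k : ℕ) < r <;> simp [flip, mix, hk]

theorem diagMatrix_flip_conj (d : Vertex (r + s) → Vertex (r + s)) (a b : Idx n (r + s)) :
    diagMatrix R n (r + s) (flip r s ∘ d ∘ flip r s) a b =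
      diagMatrix R n (r + s) d (mix n r s a b) (mix n r s b a) := by
  have hrelabel : (∀ v, Sum.elim a b v = Sum.elim a b (flip r s (d (flip r s v)))) ↔
      ∀ w, (Sum.elim a b ∘ flip r s) w = (Sum.elim a b ∘ flip r s) (d w) :=
    (flip_involutive r s).surjective.forall.trans <| by
      simp only [flip_involutive r s _, Function.comp_apply]
  rw [sum_elim_comp_flip] at hrelabel
  simp only [diagMatrix, Function.comp_apply, hrelabel]

theorem forall_sum_elim_permDiagram_iff {α : Type*} {m : ℕ} (σ : Equiv.Perm (Fin m))
    (x y : Fin m → α) :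
    (∀ w, Sum.elim x y w = Sum.elim x y (permDiagram m σ w)) ↔ y = x ∘ σ := by
  simp only [Sum.forall, permDiagram, Sum.elim_inl, Sum.elim_inr, funext_iff,
    Function.comp_apply]
  refine ⟨fun h => h.2, fun h => ⟨fun k => ?_, h⟩⟩
  simpa using (h (σ⁻¹ k)).symm

theorem diagMatrix_permDiagram (m : ℕ) (σ : Equiv.Perm (Fin m)) :
    diagMatrix R n m (permDiagram m σ) = permMatrix R n m σ := by
  ext a b
  simp only [diagMatrix, permMatrix, forall_sum_elim_permDiagram_iff]

theorem theta_toLin' (M : Matrix (Idx n (r + s)) (Idx n (r + s)) R) :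
    theta R n r s (Matrix.toLin' M) =
      Matrix.toLin' fun a b => M (mix n r s a b) (mix n r s b a) := by
  simp only [theta, LinearMap.toMatrix'_toLin']

theorem theta_intertwines (σ : Equiv.Perm (Fin (r + s))) :
    theta R n r s (Matrix.toLin' (permMatrix R n (r + s) σ)) =
      Matrix.toLin'
        (diagMatrix R n (r + s) (flip r s ∘ permDiagram (r + s) σ ∘ flip r s)) := by
  rw [theta_toLin', ← diagMatrix_permDiagram]
  congr 1
  ext a b
  exact (diagMatrix_flip_conj R n r s _ a b).symm

end ClassicalWalledBrauer
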